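/- arXiv:1403.4527 — 2 statements merged into one kernel-verified Lean document; each statement's English description precedes it below -/
import Mathlib

section
/- For every positive integer k_0, there exist integers h_1 < h_2 < ... < h_{2k_0} such that h_{2j} = h_{2j-1} + 2 for each 1 ≤ j ≤ k_0, the set {h_1, ..., h_{2k_0}} is admissible, and h_{2k_0} - h_1 = O(k_0 (log k_0)^2). -/
open Real

/-- A finite tuple of integers is admissible if for every prime `p` the values
do not cover all residue classes mod `p`. -/
def AdmissibleTuple {k : ℕ} (h : Fin k → ℤ) : Prop :=
  ∀ p : ℕ, p.Prime → ∃ r : ZMod p, ∀ j, (h j : ZMod p) ≠ r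

/-!
Take the pairs `(t + 4e, t + 4e + 2)` for `e` in a set `E ⊆ [0, K)` of size `k₀`. Modulo 2 every
entry is `≡ t`, and a prime `p > 2k₀` cannot be covered by `2k₀` entries. For an odd prime
`p ≤ 2k₀` the class `1` is missed as soon as `t + 4e ≢ ±1 (mod p)` for all `e ∈ E`. By the Chinese
remainder theorem, averaging over `t` shows that for some shift a proportion `∏ (1 - 2/p)` of all
`e < K` is good, so `K ≈ k₀ ∏_{2 < p ≤ 2k₀} p/(p-2)` suffices. This product is `O((log k₀)²)`
since `∑_{p ≤ z} 1/p ≤ log log z + O(1)`, which follows by dyadic partial summation from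
`∑_{p ≤ n} log p / p ≤ log n + log 4` (Legendre's formula and Chebyshev's `θ(n) ≤ n log 4`).
-/

open Finset
open Nat (primesLE mem_primesLE prime_of_mem_primesLE)
open scoped Nat

lemma Nat.Prime.pow_div_dvd_factorial {p : ℕ} (hp : p.Prime) (n : ℕ) : p ^ (n / p) ∣ n ! := by
  rw [hp.pow_dvd_factorial_iff (b := Nat.log p n + 2) (by omega)]
  simpa using single_le_sum (f := fun i => n / p ^ i) (fun _ _ => Nat.zero_le _)
    (show 1 ∈ Ico 1 (Nat.log p n + 2) by simp)

lemma prod_pow_div_dvd_factorial (n : ℕ) : ∏ p ∈ primesLE n, p ^ (n / p) ∣ n ! := by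
  refine prod_dvd_of_isRelPrime (fun p hp q hq hpq => ?_) fun p hp =>
    (prime_of_mem_primesLE hp).pow_div_dvd_factorial n
  rw [Function.onFun, ← Nat.coprime_iff_isRelPrime]
  exact ((Nat.coprime_primes (prime_of_mem_primesLE hp) (prime_of_mem_primesLE hq)).2 hpq).pow _ _

lemma sum_primesLE_log_div_le (n : ℕ) : ∑ p ∈ primesLE n, log p / p ≤ log n + log 4 := by
  rcases n.eq_zero_or_pos with rfl | hn
  · simp [Real.log_nonneg]
  have legendre : ∑ p ∈ primesLE n, ((n / p : ℕ) : ℝ) * log p ≤ n * log n := by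
    have hle : ∏ p ∈ primesLE n, p ^ (n / p) ≤ n ^ n :=
      (Nat.le_of_dvd n.factorial_pos (prod_pow_div_dvd_factorial n)).trans n.factorial_le_pow
    have hpos : 0 < ∏ p ∈ primesLE n, p ^ (n / p) :=
      prod_pos fun p hp => pow_pos (prime_of_mem_primesLE hp).pos _
    have := Real.log_le_log (Nat.cast_pos.mpr hpos) (Nat.cast_le (α := ℝ) |>.mpr hle)
    rw [Nat.cast_prod, Real.log_prod fun p hp => by simp [(prime_of_mem_primesLE hp).ne_zero]]
      at this
    simpa only [Nat.cast_pow, Real.log_pow] using this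
  have chebyshev : ∑ p ∈ primesLE n, log p ≤ n * log 4 := by
    rw [← Chebyshev.theta_eq_sum_primesLE_log, mul_comm]
    exact Chebyshev.theta_le_log4_mul_x n.cast_nonneg
  have floor_bound (p : ℕ) (hp : p ∈ primesLE n) :
      n * (log p / p) ≤ ((n / p : ℕ) + 1 : ℝ) * log p := by
    have hp := prime_of_mem_primesLE hp
    have hnp : (n : ℝ) / p ≤ (n / p : ℕ) + 1 := by
      rw [div_le_iff₀ (by exact_mod_cast hp.pos), add_one_mul]
      exact_mod_cast (Nat.lt_div_mul_add (a := n) hp.pos).le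
    calc (n : ℝ) * (log p / p) = n / p * log p := by ring
      _ ≤ _ := by gcongr
  refine le_of_mul_le_mul_left ?_ (by exact_mod_cast hn : (0 : ℝ) < n)
  calc (n : ℝ) * ∑ p ∈ primesLE n, log p / p
      ≤ ∑ p ∈ primesLE n, ((n / p : ℕ) + 1 : ℝ) * log p := by
        rw [mul_sum]; exact sum_le_sum floor_bound
    _ ≤ n * (log n + log 4) := by
        simp only [add_one_mul, sum_add_distrib]; linarith

lemma le_add_log_of_sub_le_sub_div {U A : ℕ → ℝ} (hA₁ : 0 ≤ A 1) (hA : ∀ j, A j ≤ j + 2)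
    (hUA : ∀ j, 1 ≤ j → U (j + 1) - U j ≤ (A (j + 1) - A j) / j) {J : ℕ} (hJ : 1 ≤ J) :
    U J ≤ U 1 + log J + 4 := by
  -- Partial summation: `U j - A j / j - log j + 3 / j` is non-increasing.
  have key : U J - A J / J - log J + 3 / J ≤ U 1 - A 1 + 3 := by
    induction J, hJ using Nat.le_induction with
    | base => simp
    | succ J hJ ih =>
      have hJ' : (0 : ℝ) < J := by exact_mod_cast hJ
      have hlog : ((J : ℝ) + 1)⁻¹ ≤ log (J + 1) - log J := by
        have := Real.one_sub_inv_le_log_of_pos (x := (J + 1) / J) (by positivity)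
        rwa [Real.log_div (by positivity) hJ'.ne', inv_div, one_sub_div (by positivity),
          add_sub_cancel_left, one_div] at this
      have hAJ := div_le_div_of_nonneg_right (hA (J + 1)) (by positivity : (0 : ℝ) ≤ J * (J + 1))
      have e1 : (A (J + 1) - A J) / J - A (J + 1) / (J + 1) =
          A (J + 1) / (J * (J + 1)) - A J / J := by
        field_simp; ring
      have e2 : ((J : ℝ) + 1 + 2) / (J * (J + 1)) = 3 / J - 3 / (J + 1) + ((J : ℝ) + 1)⁻¹ := by
        field_simp; ring
      have := hUA J hJ
      push_cast at *
      linarith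
  have hJ' : (0 : ℝ) < J := by exact_mod_cast hJ
  have : A J / J ≤ 1 + 2 / J := by
    rw [div_le_iff₀ hJ', add_mul, div_mul_cancel₀ _ hJ'.ne']; linarith [hA J]
  have : 2 / (J : ℝ) ≤ 3 / J := by gcongr; norm_num
  linarith

lemma sum_primesLE_two_pow_inv_le {J : ℕ} (hJ : 1 ≤ J) :
    ∑ p ∈ primesLE (2 ^ J), (p : ℝ)⁻¹ ≤ log J + 9 / 2 := by
  have hlog2 : 0 < log 2 := Real.log_pos one_lt_two
  have hA (j : ℕ) : (∑ p ∈ primesLE (2 ^ j), log p / p) / log 2 ≤ j + 2 := by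
    have h4 : log 4 = 2 * log 2 := by
      rw [show (4 : ℝ) = 2 ^ 2 by norm_num, Real.log_pow, Nat.cast_two]
    have := sum_primesLE_log_div_le (2 ^ j)
    rw [Nat.cast_pow, Nat.cast_two, Real.log_pow] at this
    rw [div_le_iff₀ hlog2]
    linarith
  have hstep (j : ℕ) (hj : 1 ≤ j) :
      ∑ p ∈ primesLE (2 ^ (j + 1)), (p : ℝ)⁻¹ - ∑ p ∈ primesLE (2 ^ j), (p : ℝ)⁻¹ ≤
        ((∑ p ∈ primesLE (2 ^ (j + 1)), log p / p) / log 2 -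
          (∑ p ∈ primesLE (2 ^ j), log p / p) / log 2) / j := by
    have hsub := Nat.primesLE_mono (Nat.pow_le_pow_right two_pos j.le_succ)
    rw [← sum_sdiff_eq_sub hsub, ← sub_div, ← sum_sdiff_eq_sub hsub, div_div, sum_div]
    refine sum_le_sum fun p hp => ?_
    rw [mem_sdiff, mem_primesLE, mem_primesLE] at hp
    have hp0 : (0 : ℝ) < p := by exact_mod_cast hp.1.2.pos
    have hjp : j * log 2 ≤ log p := by
      rw [← Real.log_pow]
      exact Real.log_le_log (by positivity)
        (by exact_mod_cast (not_le.mp fun h => hp.2 ⟨h, hp.1.2⟩).le)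
    have hj0 : (0 : ℝ) < j := by exact_mod_cast hj
    rw [le_div_iff₀ (by positivity), inv_mul_eq_div, mul_comm]
    gcongr
  have := le_add_log_of_sub_le_sub_div (U := fun j => ∑ p ∈ primesLE (2 ^ j), (p : ℝ)⁻¹)
    (div_nonneg (sum_nonneg fun p _ => div_nonneg (Real.log_natCast_nonneg p) p.cast_nonneg)
      hlog2.le) hA hstep hJ
  rw [pow_one, show primesLE 2 = {2} by decide] at this
  norm_num at this
  linarith

lemma exists_sum_primesLE_inv_le_log_log :
    ∃ B, ∀ z : ℕ, 2 ≤ z → ∑ p ∈ primesLE z, (p : ℝ)⁻¹ ≤ log (log z) + B := by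
  refine ⟨9 / 2 + log (2 / log 2), fun z hz => ?_⟩
  have hlog2 : 0 < log 2 := Real.log_pos one_lt_two
  have hJ1 : 1 ≤ Nat.log 2 z := Nat.le_log_of_pow_le one_lt_two (by simpa using hz)
  have hJz : Nat.log 2 z * log 2 ≤ log z := by
    rw [← Real.log_pow]
    exact Real.log_le_log (by positivity) (by exact_mod_cast Nat.pow_log_le_self 2 (by omega))
  calc ∑ p ∈ primesLE z, (p : ℝ)⁻¹
      ≤ ∑ p ∈ primesLE (2 ^ (Nat.log 2 z + 1)), (p : ℝ)⁻¹ :=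
        sum_le_sum_of_subset_of_nonneg
          (Nat.primesLE_mono (Nat.lt_pow_succ_log_self one_lt_two z).le) fun _ _ _ => by positivity
    _ ≤ log ↑(Nat.log 2 z + 1) + 9 / 2 := sum_primesLE_two_pow_inv_le (by omega)
    _ ≤ log (2 / log 2 * log z) + 9 / 2 := by
        gcongr
        rw [div_mul_eq_mul_div, le_div_iff₀ hlog2]
        have : (1 : ℝ) ≤ Nat.log 2 z := by exact_mod_cast hJ1
        push_cast; nlinarith
    _ = log (log z) + (9 / 2 + log (2 / log 2)) := by
        rw [Real.log_mul (by positivity) (Real.log_pos (by exact_mod_cast hz)).ne']; ring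

lemma log_div_sub_two_le {x : ℝ} (hx : 3 ≤ x) : log (x / (x - 2)) ≤ 2 * x⁻¹ + 12 * (x ^ 2)⁻¹ := by
  have hx2 : 0 < x - 2 := by linarith
  calc log (x / (x - 2)) ≤ x / (x - 2) - 1 := Real.log_le_sub_one_of_pos (by positivity)
    _ ≤ 2 * x⁻¹ + 12 * (x ^ 2)⁻¹ := by
        rw [div_sub_one hx2.ne', div_le_iff₀ hx2]
        field_simp
        nlinarith

def oddPrimesLE (z : ℕ) : Finset ℕ := (primesLE z).erase 2

lemma mem_oddPrimesLE {p z : ℕ} : p ∈ oddPrimesLE z ↔ p.Prime ∧ 2 < p ∧ p ≤ z := by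
  rw [oddPrimesLE, mem_erase, mem_primesLE]
  constructor
  · rintro ⟨hp2, hpz, hp⟩
    exact ⟨hp, lt_of_le_of_ne hp.two_le (Ne.symm hp2), hpz⟩
  · rintro ⟨hp, hp2, hpz⟩
    exact ⟨hp2.ne', hpz, hp⟩

lemma exists_prod_oddPrimesLE_div_sub_two_le :
    ∃ C, 0 < C ∧ ∀ z : ℕ, 2 ≤ z → ∏ p ∈ oddPrimesLE z, (p : ℝ) / (p - 2) ≤ C * log z ^ 2 := by
  obtain ⟨B, hB⟩ := exists_sum_primesLE_inv_le_log_log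
  refine ⟨exp (2 * B + 24), exp_pos _, fun z hz => ?_⟩
  have hP3 (p : ℕ) (hp : p ∈ oddPrimesLE z) : (3 : ℝ) ≤ p := by
    exact_mod_cast (mem_oddPrimesLE.mp hp).2.1
  have hpos (p : ℕ) (hp : p ∈ oddPrimesLE z) : 0 < (p : ℝ) / (p - 2) := by
    have := hP3 p hp; exact div_pos (by linarith) (by linarith)
  have hinv : ∑ p ∈ oddPrimesLE z, (p : ℝ)⁻¹ ≤ log (log z) + B :=
    (sum_le_sum_of_subset_of_nonneg (erase_subset _ _) fun _ _ _ => by positivity).trans (hB z hz)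
  have hinv_sq : ∑ p ∈ oddPrimesLE z, ((p : ℝ) ^ 2)⁻¹ ≤ 2 := by
    refine (sum_le_sum_of_subset_of_nonneg (fun p hp => ?_) fun _ _ _ => by positivity).trans
      ((sum_Ioo_inv_sq_le 0 (z + 1)).trans_eq (by norm_num))
    have := mem_oddPrimesLE.mp hp
    rw [mem_Ioo]; omega
  have hlog : log (∏ p ∈ oddPrimesLE z, (p : ℝ) / (p - 2)) ≤ 2 * log (log z) + (2 * B + 24) := by
    rw [Real.log_prod fun p hp => (hpos p hp).ne']
    calc ∑ p ∈ oddPrimesLE z, log ((p : ℝ) / (p - 2))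
        ≤ ∑ p ∈ oddPrimesLE z, (2 * (p : ℝ)⁻¹ + 12 * ((p : ℝ) ^ 2)⁻¹) :=
          sum_le_sum fun p hp => log_div_sub_two_le (hP3 p hp)
      _ = 2 * ∑ p ∈ oddPrimesLE z, (p : ℝ)⁻¹ + 12 * ∑ p ∈ oddPrimesLE z, ((p : ℝ) ^ 2)⁻¹ := by
          rw [sum_add_distrib, mul_sum, mul_sum]
      _ ≤ _ := by linarith
  have hlogz : 0 < log z := Real.log_pos (by exact_mod_cast hz)
  calc ∏ p ∈ oddPrimesLE z, (p : ℝ) / (p - 2)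
      = exp (log (∏ p ∈ oddPrimesLE z, (p : ℝ) / (p - 2))) := (Real.exp_log (prod_pos hpos)).symm
    _ ≤ exp (2 * log (log z) + (2 * B + 24)) := Real.exp_le_exp.mpr hlog
    _ = exp (2 * B + 24) * log z ^ 2 := by
        rw [Real.exp_add, mul_comm, ← Real.log_rpow hlogz, Real.exp_log (by positivity)]
        norm_num

lemma natCast_prod_div_prod_sub_two_le {P : Finset ℕ} (hP : ∀ p ∈ P, 2 ≤ p) :
    (((∏ p ∈ P, p) / ∏ p ∈ P, (p - 2) : ℕ) : ℝ) ≤ ∏ p ∈ P, (p : ℝ) / (p - 2) := by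
  refine Nat.cast_div_le.trans_eq ?_
  rw [Nat.cast_prod, Nat.cast_prod, ← prod_div_distrib]
  exact prod_congr rfl fun p hp => by rw [Nat.cast_sub (hP p hp), Nat.cast_two]

lemma exists_le_card_filter_add_mem {A ι : Type*} [AddGroup A] [Fintype A] [DecidableEq A]
    (S : Finset A) (I : Finset ι) (a : ι → A) :
    ∃ x : A, #I * #S ≤ Fintype.card A * #{i ∈ I | a i + x ∈ S} := by
  have htranslate (i : ι) : ∑ x : A, (if a i + x ∈ S then 1 else 0) = #S :=
    (Equiv.sum_comp (Equiv.addLeft (a i)) fun y => if y ∈ S then 1 else 0).trans (by simp)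
  have hsum : ∑ x : A, #{i ∈ I | a i + x ∈ S} = #I * #S := by
    simp only [card_filter]
    rw [sum_comm, sum_congr rfl fun i _ => htranslate i, sum_const, smul_eq_mul]
  obtain ⟨x, -, hx⟩ := exists_le_of_sum_le univ_nonempty
    (f := fun _ => #I * #S) (g := fun x => Fintype.card A * #{i ∈ I | a i + x ∈ S})
    (by simp only [sum_const, card_univ, smul_eq_mul]; rw [← mul_sum, hsum])
  exact ⟨x, hx⟩

lemma ZMod.card_filter_ne_one_ne_neg_one {p : ℕ} [NeZero p] (hp : 2 < p) :
    #{r : ZMod p | r ≠ 1 ∧ r ≠ -1} = p - 2 := by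
  have : Fact (2 < p) := ⟨hp⟩
  rw [show ({r : ZMod p | r ≠ 1 ∧ r ≠ -1} : Finset _) = univ \ {1, -1} by ext; simp,
    card_sdiff_of_subset (subset_univ _), card_univ, ZMod.card,
    card_pair ZMod.neg_one_ne_one.symm]

lemma exists_intCast_eq_pi {ι : Type*} [Fintype ι] {m : ι → ℕ}
    (hm : Pairwise (Function.onFun Nat.Coprime m)) (x : ∀ i, ZMod (m i)) :
    ∃ t : ℤ, ∀ i, (t : ZMod (m i)) = x i := by
  obtain ⟨t, ht⟩ := ZMod.intCast_surjective ((ZMod.prodEquivPi m hm).symm x)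
  refine ⟨t, fun i => ?_⟩
  have := congrFun (map_intCast (ZMod.prodEquivPi m hm) t) i
  rw [ht, RingEquiv.apply_symm_apply] at this
  exact this.symm

lemma exists_shift_le_card_filter {ι : Type*} {P : Finset ℕ} (hP : ∀ p ∈ P, p.Prime ∧ 2 < p)
    (I : Finset ι) (a : ι → ℤ) {k : ℕ} (hk : k * ∏ p ∈ P, p ≤ #I * ∏ p ∈ P, (p - 2)) :
    ∃ t : ℤ, k ≤ #{i ∈ I | ∀ p ∈ P,
      ((a i + t : ℤ) : ZMod p) ≠ 1 ∧ ((a i + t : ℤ) : ZMod p) ≠ -1} := by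
  classical
  have : ∀ p : P, NeZero (p : ℕ) := fun p => ⟨(hP p p.2).1.ne_zero⟩
  let S : Finset (∀ p : P, ZMod p) := Fintype.piFinset fun _ => {r | r ≠ 1 ∧ r ≠ -1}
  have hS : #S = ∏ p ∈ P, (p - 2) := by
    rw [Fintype.card_piFinset, ← prod_coe_sort P]
    exact prod_congr rfl fun p _ => ZMod.card_filter_ne_one_ne_neg_one (hP p p.2).2
  have hA : Fintype.card (∀ p : P, ZMod p) = ∏ p ∈ P, p := by
    simp [Fintype.card_pi, ZMod.card, prod_attach P (f := fun p => p)]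
  obtain ⟨x, hx⟩ := exists_le_card_filter_add_mem S I fun i (p : P) => (a i : ZMod p)
  obtain ⟨t, ht⟩ := exists_intCast_eq_pi (m := fun p : P => (p : ℕ))
    (fun p q hpq => (Nat.coprime_primes (hP p p.2).1 (hP q q.2).1).2 (Subtype.coe_ne_coe.2 hpq)) x
  refine ⟨t, Nat.le_of_mul_le_mul_left ?_ (prod_pos fun p hp => (hP p hp).1.pos)⟩
  have hfilter : {i ∈ I | (fun (p : P) => (a i : ZMod p)) + x ∈ S} =
      {i ∈ I | ∀ p ∈ P, ((a i + t : ℤ) : ZMod p) ≠ 1 ∧ ((a i + t : ℤ) : ZMod p) ≠ -1} := by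
    ext i
    simp [S, ← ht]
  rw [hS, hA, hfilter] at hx
  linarith

lemma exists_forall_ne_of_card_lt {α β : Type*} [Fintype α] [Fintype β] (f : α → β)
    (h : Fintype.card α < Fintype.card β) : ∃ b, ∀ a, f a ≠ b := by
  by_contra! hf
  exact (Fintype.card_le_of_surjective f hf).not_gt h

def twinTuple {k : ℕ} (a : Fin k → ℤ) (i : Fin (2 * k)) : ℤ :=
  a ⟨i / 2, Nat.div_lt_of_lt_mul i.2⟩ + 2 * ((i : ℕ) % 2 : ℕ)

section twinTuple

variable {k : ℕ} {a : Fin k → ℤ}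

lemma twinTuple_strictMono (ha : ∀ i j, i < j → a i + 2 < a j) : StrictMono (twinTuple a) := by
  intro i j hij
  have hij : (i : ℕ) < j := hij
  unfold twinTuple
  rcases (Nat.div_le_div_right (c := 2) hij.le).lt_or_eq with hlt | heq
  · have := ha ⟨i / 2, Nat.div_lt_of_lt_mul i.2⟩ ⟨j / 2, Nat.div_lt_of_lt_mul j.2⟩ hlt
    have : (i : ℕ) % 2 < 2 := Nat.mod_lt _ two_pos
    omega
  · simp only [heq]
    omega

lemma twinTuple_two_mul_add_one (j : ℕ) (hj1 : 2 * j + 1 < 2 * k) (hj0 : 2 * j < 2 * k) :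
    twinTuple a ⟨2 * j + 1, hj1⟩ = twinTuple a ⟨2 * j, hj0⟩ + 2 := by
  simp only [twinTuple, show (2 * j + 1) / 2 = j by omega, show 2 * j / 2 = j by omega,
    Nat.mul_add_mod, Nat.mul_mod_right]
  norm_num

lemma twinTuple_sub_le {D : ℤ} (ha : ∀ i j, a i - a j ≤ D) (i j : Fin (2 * k)) :
    twinTuple a i - twinTuple a j ≤ D + 2 := by
  have := ha ⟨i / 2, Nat.div_lt_of_lt_mul i.2⟩ ⟨j / 2, Nat.div_lt_of_lt_mul j.2⟩
  unfold twinTuple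
  omega

lemma twinTuple_admissible {c : ZMod 2} (hpar : ∀ i, (a i : ZMod 2) = c)
    (hodd : ∀ p, p.Prime → 2 < p → p ≤ 2 * k → ∀ i, (a i : ZMod p) ≠ 1 ∧ (a i : ZMod p) ≠ -1) :
    AdmissibleTuple (twinTuple a) := by
  intro p hp
  rcases hp.two_le.eq_or_lt with rfl | hp2
  · refine ⟨c + 1, fun i h => ?_⟩
    simp [twinTuple, hpar, show (2 : ZMod 2) = 0 from rfl] at h
  by_cases hpk : p ≤ 2 * k
  · refine ⟨1, fun i h => ?_⟩
    have := hodd p hp hp2 hpk ⟨i / 2, Nat.div_lt_of_lt_mul i.2⟩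
    simp only [twinTuple] at h
    rcases Nat.mod_two_eq_zero_or_one i with hi | hi <;> rw [hi] at h <;> push_cast at h
    · exact this.1 (by simpa using h)
    · exact this.2 (by linear_combination h)
  · have : NeZero p := ⟨hp.ne_zero⟩
    exact exists_forall_ne_of_card_lt _ (by simp only [Fintype.card_fin, ZMod.card]; omega)

end twinTuple

lemma exists_admissible_twinTuple {k K : ℕ}
    (hK : k * ∏ p ∈ oddPrimesLE (2 * k), p ≤ K * ∏ p ∈ oddPrimesLE (2 * k), (p - 2)) :
    ∃ a : Fin k → ℤ, StrictMono (twinTuple a) ∧ AdmissibleTuple (twinTuple a) ∧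
      ∀ i j, twinTuple a i - twinTuple a j ≤ 4 * K := by
  obtain ⟨t, ht⟩ := exists_shift_le_card_filter
    (fun p hp => (mem_oddPrimesLE.mp hp).imp_right And.left) (range K) (fun i => 4 * (i : ℤ))
    (by rwa [card_range])
  have he := orderEmbOfCardLe_mem _ ht
  generalize orderEmbOfCardLe _ ht = e at he
  simp only [mem_filter, mem_range] at he
  refine ⟨fun i => 4 * (e i : ℤ) + t, twinTuple_strictMono fun i j hij => ?_,
    twinTuple_admissible (c := t) (fun i => ?_) fun p hp hp2 hpk i => ?_,
    fun i j => (twinTuple_sub_le (D := 4 * K - 2) ?_ i j).trans_eq (by ring)⟩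
  · have : e i < e j := e.strictMono hij
    omega
  · simp [show (4 : ZMod 2) = 0 from rfl]
  · exact (he i).2 p (mem_oddPrimesLE.mpr ⟨hp, hp2, hpk⟩)
  · intro i j
    have := (he i).1
    omega

lemma log_two_mul_sq_le {x : ℝ} (hx : 0 < x) : log (2 * x) ^ 2 ≤ 2 + 2 * log x ^ 2 := by
  rw [Real.log_mul two_ne_zero hx.ne']
  have := Real.log_two_lt_d9
  have := Real.log_pos one_lt_two
  nlinarith [sq_nonneg (log 2 - log x)]

lemma le_three_mul_mul_log_sq_add_one {x : ℝ} (hx : 1 ≤ x) : x ≤ 3 * (x * log x ^ 2 + 1) := by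
  rcases le_total x 3 with h3 | h3
  · nlinarith [sq_nonneg (log x)]
  · have : 1 ≤ log x := by
      rw [Real.le_log_iff_exp_le (by linarith)]
      exact Real.exp_one_lt_three.le.trans h3
    nlinarith [one_le_pow₀ (n := 2) this]

theorem admissible_twin_tuples :
    ∃ C : ℝ, 0 < C ∧ ∀ k₀ : ℕ, 1 ≤ k₀ →
      ∃ h : Fin (2 * k₀) → ℤ,
        StrictMono h ∧
        (∀ j : ℕ, ∀ hj1 : 2 * j + 1 < 2 * k₀, ∀ hj0 : 2 * j < 2 * k₀,
          h ⟨2 * j + 1, hj1⟩ = h ⟨2 * j, hj0⟩ + 2) ∧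
        AdmissibleTuple h ∧
        ∀ h0 : 0 < 2 * k₀,
          ((h ⟨2 * k₀ - 1, by omega⟩ : ℝ) - h ⟨0, h0⟩
            ≤ C * (k₀ * (Real.log k₀) ^ 2 + 1)) := by
  obtain ⟨C, hC0, hC⟩ := exists_prod_oddPrimesLE_div_sub_two_le
  refine ⟨32 * C + 12, by positivity, fun k hk => ?_⟩
  have hP (p : ℕ) (hp : p ∈ oddPrimesLE (2 * k)) : 2 ≤ p := (mem_oddPrimesLE.mp hp).2.1.le
  set M := ∏ p ∈ oddPrimesLE (2 * k), p
  set G := ∏ p ∈ oddPrimesLE (2 * k), (p - 2)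
  have hG : 0 < G := prod_pos fun p hp => by have := (mem_oddPrimesLE.mp hp).2.1; omega
  obtain ⟨a, hmono, hadm, hwidth⟩ := exists_admissible_twinTuple (k := k) (K := k * (M / G + 1))
    (by rw [mul_assoc, add_one_mul]; exact Nat.mul_le_mul_left k (Nat.lt_div_mul_add hG).le)
  refine ⟨twinTuple a, hmono, twinTuple_two_mul_add_one, hadm, fun h0 => ?_⟩
  have hk' : (1 : ℝ) ≤ k := by exact_mod_cast hk
  have hMG : ((M / G : ℕ) : ℝ) ≤ C * (2 + 2 * log k ^ 2) :=
    calc ((M / G : ℕ) : ℝ) ≤ ∏ p ∈ oddPrimesLE (2 * k), (p : ℝ) / (p - 2) :=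
          natCast_prod_div_prod_sub_two_le hP
      _ ≤ C * log (2 * k : ℕ) ^ 2 := hC _ (by omega)
      _ ≤ C * (2 + 2 * log k ^ 2) := by
          push_cast; exact mul_le_mul_of_nonneg_left (log_two_mul_sq_le (by linarith)) hC0.le
  have hw := Int.cast_le (R := ℝ) |>.mpr (hwidth ⟨2 * k - 1, by omega⟩ ⟨0, h0⟩)
  simp only [Int.cast_sub, Int.cast_mul, Int.cast_ofNat, Int.cast_natCast, Nat.cast_mul,
    Nat.cast_add_one, Int.cast_add, Int.cast_one] at hw
  refine hw.trans ?_
  nlinarith [mul_le_mul_of_nonneg_left hMG (Nat.cast_nonneg k), le_three_mul_mul_log_sq_add_one hk',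
    mul_nonneg (Nat.cast_nonneg k) (sq_nonneg (log k))]
end

section
/- Let k_0 ≥ 2 with log(2k_0) - 2 log log(2k_0) > 2, and define A, T, γ, F° as follows: A = log(2k_0) - 2 log log(2k_0), T = (e^A - 1)/A, γ = (1/A)(1 - 1/(1+AT)), F°(t_1,...,t_{2k_0}) = ∏_{j=1}^{2k_0} 1_{[0,T]}(2k_0 t_j)/(1 + 2k_0 A t_j). Assume 1 - A/(e^A - 1) - e^A/(2k_0) > 0. Then ∫_{Δ'} (∫_0^∞ F°(t_1,...,t_{2k_0}) dt_{2k_0})^2 dt_1 ⋯ dt_{2k_0-1} ≥ ((log(2k_0) - 2 log log(2k_0) - 2)/(2k_0)) · γ^{2k_0}/(2k_0)^{2k_0}, where Δ' = {(t_1,...,t_{2k_0-1}) ∈ [0,∞)^{2k_0-1} : t_1 + ... + t_{2k_0-1} ≤ 1}. -/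
/-!
Write `w(t) = 1_{[0, T/k]}(t) / (1 + k A t)` with `k = 2 k₀`, so that `F°(t) = ∏ w(t_j)`. Since
`1 + k A (T/k) = e^A`, `∫ w = 1/k`, and the claim becomes a lower bound for the mass that
`∏ w(t_j)²` gives to the simplex. The total mass is `(γ/k)^(k-1)`. The mass off the simplex is at
most `e^{-δ} (∫ e^{δt} w(t)² dt)^(k-1)` (Chernoff), and `e^{δt} ≤ 1 + δ t e^{δT/k}` on the
support bounds the moment generating function through the mean `μ/k` of the density `w²/∫w²`.
The choice `δ = k(1-μ)/(2T)` makes the off-simplex mass at most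
`(γ/k)^(k-1) exp(-k(1-μ)²/(4T))`, and `k = e^A log² k` forces `k(1-μ)²/(4T) ≥ log(A/2)`, so the
fraction left on the simplex is at least `1 - 2/A ≥ (A-2)γ`.
-/

open Real MeasureTheory Set

section Chernoff

variable {ι : Type*} [Fintype ι] {f : ℝ → ℝ} {δ : ℝ}

lemma prod_le_exp_neg_mul_prod_exp_mul (hδ : 0 ≤ δ) (hf0 : ∀ x, 0 ≤ f x)
    (hf_neg : ∀ x < 0, f x = 0) {t : ι → ℝ}
    (ht : t ∉ {t : ι → ℝ | (∀ j, 0 ≤ t j) ∧ ∑ j, t j ≤ 1}) :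
    ∏ j, f (t j) ≤ exp (-δ) * ∏ j, (exp (δ * t j) * f (t j)) := by
  simp only [mem_ofPred_eq, not_and_or, not_forall, not_le] at ht
  rcases ht with ⟨j, hj⟩ | hsum
  · rw [Finset.prod_eq_zero (Finset.mem_univ j) (hf_neg _ hj)]
    exact mul_nonneg (exp_pos _).le
      (Finset.prod_nonneg fun i _ => mul_nonneg (exp_pos _).le (hf0 _))
  · have hprod : exp (-δ) * ∏ j, (exp (δ * t j) * f (t j))
        = exp (δ * (∑ j, t j - 1)) * ∏ j, f (t j) := by
      rw [Finset.prod_mul_distrib, ← exp_sum, ← mul_assoc, ← exp_add, ← Finset.mul_sum]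
      ring_nf
    rw [hprod]
    refine le_mul_of_one_le_left (Finset.prod_nonneg fun i _ => hf0 _) (one_le_exp ?_)
    exact mul_nonneg hδ (by linarith)

lemma setIntegral_compl_simplex_prod_le (hδ : 0 ≤ δ) (hf0 : ∀ x, 0 ≤ f x)
    (hf_neg : ∀ x < 0, f x = 0) (hf : Integrable f)
    (hfδ : Integrable fun x => exp (δ * x) * f x) :
    ∫ t in {t : ι → ℝ | (∀ j, 0 ≤ t j) ∧ ∑ j, t j ≤ 1}ᶜ, ∏ j, f (t j)
      ≤ exp (-δ) * (∫ x, exp (δ * x) * f x) ^ Fintype.card ι := by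
  rw [← integral_fintype_prod_volume_eq_pow, ← integral_const_mul]
  refine (setIntegral_mono_on (Integrable.fintype_prod fun _ => hf).integrableOn
    ((Integrable.fintype_prod fun _ => hfδ).const_mul _).integrableOn ?_
    fun t ht => prod_le_exp_neg_mul_prod_exp_mul hδ hf0 hf_neg ht).trans ?_
  · exact (by measurability : MeasurableSet {t : ι → ℝ | (∀ j, 0 ≤ t j) ∧ ∑ j, t j ≤ 1}).compl
  · exact setIntegral_le_integral ((Integrable.fintype_prod fun _ => hfδ).const_mul _)
      (Filter.Eventually.of_forall fun t => mul_nonneg (exp_pos _).le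
        (Finset.prod_nonneg fun j _ => mul_nonneg (exp_pos _).le (hf0 _)))

lemma pow_sub_le_setIntegral_simplex_prod (hδ : 0 ≤ δ) (hf0 : ∀ x, 0 ≤ f x)
    (hf_neg : ∀ x < 0, f x = 0) (hf : Integrable f)
    (hfδ : Integrable fun x => exp (δ * x) * f x) :
    (∫ x, f x) ^ Fintype.card ι - exp (-δ) * (∫ x, exp (δ * x) * f x) ^ Fintype.card ι
      ≤ ∫ t in {t : ι → ℝ | (∀ j, 0 ≤ t j) ∧ ∑ j, t j ≤ 1}, ∏ j, f (t j) := by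
  have hS : MeasurableSet {t : ι → ℝ | (∀ j, 0 ≤ t j) ∧ ∑ j, t j ≤ 1} := by measurability
  have := integral_add_compl hS (Integrable.fintype_prod (μ := fun _ : ι => volume) fun _ => hf)
  rw [← volume_pi, integral_fintype_prod_volume_eq_pow] at this
  linarith [setIntegral_compl_simplex_prod_le (ι := ι) hδ hf0 hf_neg hf hfδ]

end Chernoff

lemma exp_le_one_add_mul_exp (y : ℝ) : exp y ≤ 1 + y * exp y :=
  calc exp y = (1 - y) * exp y + y * exp y := by ring
    _ ≤ exp (-y) * exp y + y * exp y := by gcongr; exact one_sub_le_exp_neg y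
    _ = 1 + y * exp y := by rw [← exp_add, neg_add_cancel, exp_zero]

lemma integral_exp_mul_le_of_eq_zero_off_Icc {f : ℝ → ℝ} {δ M : ℝ} (hδ : 0 ≤ δ)
    (hf0 : ∀ x, 0 ≤ f x) (hfM : ∀ x ∉ Icc 0 M, f x = 0) (hf : Integrable f)
    (hxf : Integrable fun x => x * f x) (hfδ : Integrable fun x => exp (δ * x) * f x) :
    ∫ x, exp (δ * x) * f x ≤ (∫ x, f x) + δ * exp (δ * M) * ∫ x, x * f x := by
  rw [← integral_const_mul, ← integral_add hf (hxf.const_mul _)]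
  refine integral_mono hfδ (hf.add (hxf.const_mul _)) fun x => ?_
  by_cases hx : x ∈ Icc 0 M
  · have hexp : exp (δ * x) ≤ 1 + δ * exp (δ * M) * x :=
      calc exp (δ * x) ≤ 1 + δ * x * exp (δ * x) := exp_le_one_add_mul_exp _
        _ ≤ 1 + δ * x * exp (δ * M) := by
          gcongr
          · exact mul_nonneg hδ hx.1
          · exact hx.2
        _ = 1 + δ * exp (δ * M) * x := by ring
    calc exp (δ * x) * f x ≤ (1 + δ * exp (δ * M) * x) * f x :=
          mul_le_mul_of_nonneg_right hexp (hf0 x)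
      _ = f x + δ * exp (δ * M) * (x * f x) := by ring
  · simp [hfM x hx]

lemma one_sub_two_mul_mul_exp_le (s : ℝ) : (1 - 2 * s) * exp s ≤ 1 - s := by
  have h := one_sub_le_exp_neg s
  have hexp : exp s * exp (-s) = 1 := by rw [← exp_add, add_neg_cancel, exp_zero]
  rcases le_or_gt s (1 / 2) with hs | hs
  · nlinarith [exp_pos s, mul_le_mul_of_nonneg_left h (exp_pos s).le, sq_nonneg s]
  · nlinarith [one_le_exp (by linarith : 0 ≤ s)]

lemma exp_neg_mul_one_add_pow_le {δ μ k : ℝ} {n : ℕ} (hδ : 0 ≤ δ) (hμ : 0 ≤ μ) (hk : 0 < k)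
    (hn : (n : ℝ) ≤ k) :
    exp (-δ) * (1 + δ * exp ((1 - μ) / 2) * μ / k) ^ n ≤ exp (-(δ * ((1 - μ) / 2))) := by
  set x := δ * exp ((1 - μ) / 2) * μ / k
  have hx : 0 ≤ x := by positivity
  have hμexp : μ * exp ((1 - μ) / 2) ≤ 1 - (1 - μ) / 2 := by
    convert one_sub_two_mul_mul_exp_le ((1 - μ) / 2) using 2
    ring
  calc exp (-δ) * (1 + x) ^ n ≤ exp (-δ) * exp (k * x) := by
        gcongr
        calc (1 + x) ^ n ≤ exp x ^ n := by gcongr; linarith [add_one_le_exp x]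
          _ = exp (n * x) := by rw [← exp_nat_mul]
          _ ≤ exp (k * x) := by gcongr
    _ = exp (-δ + δ * (μ * exp ((1 - μ) / 2))) := by
        rw [← exp_add]; congr 1; simp only [x]; field_simp
    _ ≤ exp (-(δ * ((1 - μ) / 2))) := by
        gcongr; nlinarith

section Calculus

variable {a M : ℝ}

lemma one_add_mul_ne_zero_of_mem_uIcc (ha : 0 ≤ a) (hM : 0 ≤ M) {t : ℝ} (ht : t ∈ uIcc 0 M) :
    1 + a * t ≠ 0 := by
  rw [uIcc_of_le hM] at ht
  nlinarith [ht.1]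

lemma hasDerivAt_one_add_mul (a t : ℝ) : HasDerivAt (fun u : ℝ => 1 + a * u) a t := by
  simpa using ((hasDerivAt_id t).const_mul a).const_add 1

lemma integral_inv_one_add_mul (ha : 0 < a) (hM : 0 ≤ M) :
    ∫ t in (0 : ℝ)..M, (1 + a * t)⁻¹ = log (1 + a * M) / a := by
  have hne := fun t ht => one_add_mul_ne_zero_of_mem_uIcc ha.le hM (t := t) ht
  rw [intervalIntegral.integral_eq_sub_of_hasDerivAt (f := fun u => log (1 + a * u) / a)
    (fun t ht => (((hasDerivAt_one_add_mul a t).log (hne t ht)).div_const a).congr_deriv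
      (by field_simp))
    (ContinuousOn.intervalIntegrable (u := fun t => (1 + a * t)⁻¹)
      (ContinuousOn.inv₀ (by fun_prop) hne))]
  simp

lemma integral_inv_one_add_mul_sq (ha : 0 < a) (hM : 0 ≤ M) :
    ∫ t in (0 : ℝ)..M, (1 + a * t)⁻¹ ^ 2 = (1 - (1 + a * M)⁻¹) / a := by
  have hne := fun t ht => one_add_mul_ne_zero_of_mem_uIcc ha.le hM (t := t) ht
  rw [intervalIntegral.integral_eq_sub_of_hasDerivAt (f := fun u => -(1 + a * u)⁻¹ / a)
    (fun t ht => (((hasDerivAt_one_add_mul a t).inv (hne t ht)).neg.div_const a).congr_deriv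
      (by field_simp))
    (ContinuousOn.intervalIntegrable (u := fun t => (1 + a * t)⁻¹ ^ 2)
      ((ContinuousOn.inv₀ (by fun_prop) hne).pow 2))]
  field_simp
  ring

lemma integral_mul_inv_one_add_mul_sq (ha : 0 < a) (hM : 0 ≤ M) :
    ∫ t in (0 : ℝ)..M, t * (1 + a * t)⁻¹ ^ 2
      = (log (1 + a * M) + (1 + a * M)⁻¹ - 1) / a ^ 2 := by
  have hne := fun t ht => one_add_mul_ne_zero_of_mem_uIcc ha.le hM (t := t) ht
  rw [intervalIntegral.integral_eq_sub_of_hasDerivAt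
    (f := fun u => (log (1 + a * u) + (1 + a * u)⁻¹) / a ^ 2)
    (fun t ht => (((hasDerivAt_one_add_mul a t).log (hne t ht)).add
      ((hasDerivAt_one_add_mul a t).inv (hne t ht)) |>.div_const (a ^ 2)).congr_deriv
      (by field_simp; ring))
    (ContinuousOn.intervalIntegrable (u := fun t => t * (1 + a * t)⁻¹ ^ 2)
      (continuousOn_id.mul ((ContinuousOn.inv₀ (by fun_prop) hne).pow 2)))]
  simp
  ring

end Calculus

/-- With `a = k A` and `M = T / k` this is the factor `1_{[0,T]}(k t) / (1 + k A t)` of `F°`. -/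
noncomputable def maynardWeight (a M : ℝ) : ℝ → ℝ :=
  indicator (Icc 0 M) fun t => (1 + a * t)⁻¹

section MaynardWeight

variable {a M : ℝ}

lemma mul_maynardWeight_sq (h : ℝ → ℝ) (t : ℝ) :
    h t * maynardWeight a M t ^ 2 = indicator (Icc 0 M) (fun t => h t * (1 + a * t)⁻¹ ^ 2) t := by
  by_cases ht : t ∈ Icc 0 M <;> simp [maynardWeight, ht]

lemma maynardWeight_sq_eq_zero {t : ℝ} (ht : t ∉ Icc 0 M) : maynardWeight a M t ^ 2 = 0 := by
  simp [maynardWeight, ht]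

lemma integrable_mul_maynardWeight_sq (ha : 0 ≤ a) {h : ℝ → ℝ} (hh : Continuous h) :
    Integrable fun t => h t * maynardWeight a M t ^ 2 := by
  simp only [mul_maynardWeight_sq]
  refine (ContinuousOn.integrableOn_compact isCompact_Icc ?_).integrable_indicator
    measurableSet_Icc
  exact hh.continuousOn.mul
    ((ContinuousOn.inv₀ (by fun_prop) fun t ht => by nlinarith [ht.1]).pow 2)

lemma integrable_maynardWeight_sq (ha : 0 ≤ a) : Integrable fun t => maynardWeight a M t ^ 2 := by
  simpa using integrable_mul_maynardWeight_sq (M := M) ha continuous_const (h := fun _ => 1)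

lemma integral_mul_maynardWeight_sq_eq (h : ℝ → ℝ) (hM : 0 ≤ M) :
    ∫ t, h t * maynardWeight a M t ^ 2 = ∫ t in (0 : ℝ)..M, h t * (1 + a * t)⁻¹ ^ 2 := by
  simp only [mul_maynardWeight_sq]
  rw [integral_indicator measurableSet_Icc, integral_Icc_eq_integral_Ioc,
    intervalIntegral.integral_of_le hM]

lemma integral_Ioi_maynardWeight (ha : 0 < a) (hM : 0 ≤ M) :
    ∫ t in Ioi 0, maynardWeight a M t = log (1 + a * M) / a := by
  have hIoc : Ioi 0 ∩ Icc 0 M = Ioc 0 M := by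
    ext t
    simp only [mem_inter_iff, mem_Ioi, mem_Icc, mem_Ioc]
    exact ⟨fun h => ⟨h.1, h.2.2⟩, fun h => ⟨h.1, h.1.le, h.2⟩⟩
  rw [maynardWeight, setIntegral_indicator measurableSet_Icc, hIoc,
    ← integral_inv_one_add_mul ha hM, intervalIntegral.integral_of_le hM]

lemma integral_maynardWeight_sq (ha : 0 < a) (hM : 0 ≤ M) :
    ∫ t, maynardWeight a M t ^ 2 = (1 - (1 + a * M)⁻¹) / a := by
  have h := integral_mul_maynardWeight_sq_eq (a := a) (fun _ => 1) hM
  simp only [one_mul] at h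
  rw [h, integral_inv_one_add_mul_sq ha hM]

lemma integral_mul_maynardWeight_sq (ha : 0 < a) (hM : 0 ≤ M) :
    ∫ t, t * maynardWeight a M t ^ 2 = (log (1 + a * M) + (1 + a * M)⁻¹ - 1) / a ^ 2 := by
  rw [integral_mul_maynardWeight_sq_eq (fun t => t) hM]
  exact integral_mul_inv_one_add_mul_sq ha hM

lemma integral_exp_mul_maynardWeight_sq_le (ha : 0 < a) (hM : 0 ≤ M) {δ : ℝ} (hδ : 0 ≤ δ) :
    ∫ t, exp (δ * t) * maynardWeight a M t ^ 2
      ≤ (1 - (1 + a * M)⁻¹) / a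
        + δ * exp (δ * M) * ((log (1 + a * M) + (1 + a * M)⁻¹ - 1) / a ^ 2) := by
  rw [← integral_maynardWeight_sq ha hM, ← integral_mul_maynardWeight_sq ha hM]
  exact integral_exp_mul_le_of_eq_zero_off_Icc hδ (fun t => sq_nonneg _)
    (fun t ht => maynardWeight_sq_eq_zero ht) (integrable_maynardWeight_sq ha.le)
    (integrable_mul_maynardWeight_sq ha.le continuous_id)
    (integrable_mul_maynardWeight_sq ha.le (by fun_prop))

lemma indicator_Icc_mul_div_eq_maynardWeight {k A T : ℝ} (hk : 0 < k) (y : ℝ) :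
    indicator (Icc 0 T) (fun _ => (1 : ℝ)) (k * y) / (1 + k * A * y)
      = maynardWeight (k * A) (T / k) y := by
  have hmem : k * y ∈ Icc 0 T ↔ y ∈ Icc 0 (T / k) := by
    simp only [mem_Icc, le_div_iff₀ hk, mul_comm y k, mul_nonneg_iff_of_pos_left hk]
  by_cases hy : y ∈ Icc 0 (T / k)
  · simp [maynardWeight, hy, hmem.mpr hy]
  · simp [maynardWeight, hy, mt hmem.mp hy]

end MaynardWeight

lemma two_mul_add_one_mul_exp_neg_mul_le {A : ℝ} (hA : 2 ≤ A) :
    2 * ((A + 1) * exp (-A)) * (A / 4 + log A) ≤ A / 4 + log 2 := by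
  have hlogA : log A ≤ A / 2 - 1 + log 2 := by
    have := log_le_sub_one_of_pos (show 0 < A / 2 by linarith)
    rw [log_div (by linarith) two_ne_zero] at this
    linarith
  have he2 : 7.389 ≤ exp 2 := by
    have h := exp_one_gt_d9
    have : exp 2 = exp 1 * exp 1 := by rw [← exp_add]; norm_num
    nlinarith
  have hexpA : 7.389 * (1 + (A - 2) + (A - 2) ^ 2 / 2) ≤ exp A := by
    have : exp A = exp 2 * exp (A - 2) := by rw [← exp_add]; ring_nf
    rw [this]
    gcongr
    exact quadratic_le_exp_of_nonneg (by linarith)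
  have hlog2 := log_two_gt_d9
  rw [exp_neg, show 2 * ((A + 1) * (exp A)⁻¹) * (A / 4 + log A)
    = 2 * (A + 1) * (A / 4 + log A) / exp A by field_simp, div_le_iff₀ (exp_pos A)]
  nlinarith [mul_le_mul_of_nonneg_left hexpA (by positivity : 0 ≤ A / 4 + log 2),
    mul_le_mul_of_nonneg_left hlogA (by positivity : 0 ≤ 2 * (A + 1)),
    mul_nonneg (by linarith : 0 ≤ A - 2) (by linarith : 0 ≤ A - 2)]

lemma log_div_two_le_sq_mul_sq_div {A L : ℝ} (hA : 2 ≤ A) (hL : A + 2 * log A ≤ L) :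
    log (A / 2) ≤ L ^ 2 * (1 - (A + 1) * exp (-A)) ^ 2 / (4 * A) := by
  set ε := (A + 1) * exp (-A)
  have hlogA : 0 ≤ log A := log_nonneg (by linarith)
  have hL2 : A * (A / 4 + log A) * 4 ≤ L ^ 2 := by nlinarith
  have hε := two_mul_add_one_mul_exp_neg_mul_le hA
  rw [log_div (by linarith) two_ne_zero, le_div_iff₀ (by linarith)]
  -- `(1 - ε)² ≥ 1 - 2ε`, and `hε` absorbs the loss `2ε (A/4 + log A)` into `A/4 + log 2`.
  nlinarith [mul_le_mul_of_nonneg_right hL2 (sq_nonneg (1 - ε)), sq_nonneg ε,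
    mul_nonneg (mul_nonneg (by linarith : 0 ≤ A) (by linarith : 0 ≤ A / 4 + log A)) (sq_nonneg ε)]

lemma add_one_mul_exp_neg_lt_one {A : ℝ} (hA : A ≠ 0) : (A + 1) * exp (-A) < 1 := by
  rw [exp_neg, ← div_eq_mul_inv, div_lt_one (exp_pos A)]
  exact add_one_lt_exp hA

/-- `μ / k` is the mean of the probability density proportional to `maynardWeight (k A) M ^ 2`
when `1 + k A M = e^A`. -/
noncomputable def maynardMean (A : ℝ) : ℝ :=
  (A - 1 + exp (-A)) / (A * (1 - exp (-A)))

section MaynardMean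

variable {A : ℝ}

lemma maynardMean_nonneg (hA : 0 < A) : 0 ≤ maynardMean A :=
  div_nonneg (by linarith [one_sub_le_exp_neg A])
    (mul_nonneg hA.le (sub_nonneg.mpr (exp_le_one_iff.mpr (by linarith))))

lemma div_le_one_sub_maynardMean (hA : 0 < A) :
    (1 - (A + 1) * exp (-A)) / A ≤ 1 - maynardMean A := by
  have hE0 := exp_pos (-A)
  have hE1 : exp (-A) < 1 := exp_lt_one_iff.mpr (by linarith)
  have h : 1 - maynardMean A = (1 - (A + 1) * exp (-A)) / (A * (1 - exp (-A))) := by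
    have : 1 - exp (-A) ≠ 0 := by linarith
    rw [maynardMean]; field_simp; ring
  rw [h]
  exact div_le_div_of_nonneg_left (by linarith [add_one_mul_exp_neg_lt_one hA.ne'])
    (by nlinarith) (by nlinarith)

lemma maynardMean_le_one (hA : 0 < A) : maynardMean A ≤ 1 := by
  have h : 0 ≤ (1 - (A + 1) * exp (-A)) / A :=
    div_nonneg (by linarith [add_one_mul_exp_neg_lt_one hA.ne']) hA.le
  linarith [div_le_one_sub_maynardMean hA]

lemma exp_neg_mul_one_sub_maynardMean_sq_div_le {L k T : ℝ} (hA : 2 < A)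
    (hL : A + 2 * log A ≤ L) (hk : k = exp A * L ^ 2) (hT : T = (exp A - 1) / A) :
    exp (-(k * (1 - maynardMean A) ^ 2 / (4 * T))) ≤ 1 - (A - 2) * ((1 - exp (-A)) / A) := by
  have hA0 : 0 < A := by linarith
  have hkT : A * L ^ 2 ≤ k / T := by
    rw [hk, hT, div_div_eq_mul_div, le_div_iff₀ (by linarith [one_lt_exp_iff.mpr hA0])]
    nlinarith [mul_nonneg (sq_nonneg L) hA0.le]
  have hexponent : log (A / 2) ≤ k * (1 - maynardMean A) ^ 2 / (4 * T) := by
    have hε0 : 0 ≤ (1 - (A + 1) * exp (-A)) / A :=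
      div_nonneg (by linarith [add_one_mul_exp_neg_lt_one hA0.ne']) hA0.le
    calc log (A / 2) ≤ L ^ 2 * (1 - (A + 1) * exp (-A)) ^ 2 / (4 * A) :=
          log_div_two_le_sq_mul_sq_div hA.le hL
      _ = A * L ^ 2 * ((1 - (A + 1) * exp (-A)) / A) ^ 2 / 4 := by field_simp
      _ ≤ k / T * (1 - maynardMean A) ^ 2 / 4 := by
          gcongr
          · exact hkT.trans' (by positivity)
          · exact div_le_one_sub_maynardMean hA0
      _ = k * (1 - maynardMean A) ^ 2 / (4 * T) := by ring
  calc exp (-(k * (1 - maynardMean A) ^ 2 / (4 * T))) ≤ exp (-log (A / 2)) := by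
        gcongr
    _ = 2 / A := by rw [exp_neg, exp_log (by linarith), inv_div]
    _ ≤ 1 - (A - 2) * ((1 - exp (-A)) / A) := by
        rw [div_le_iff₀ hA0]
        field_simp
        nlinarith [exp_pos (-A)]

end MaynardMean

lemma pow_mul_le_setIntegral_simplex_prod_maynardWeight_sq {ι : Type*} [Fintype ι]
    {A L k T : ℝ} (hA : 2 < A) (hL : A + 2 * log A ≤ L) (hk : k = exp A * L ^ 2)
    (hT : T = (exp A - 1) / A) (hn : (Fintype.card ι : ℝ) ≤ k) :
    ((1 - exp (-A)) / (k * A)) ^ Fintype.card ι * ((A - 2) * ((1 - exp (-A)) / A))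
      ≤ ∫ t in {t : ι → ℝ | (∀ j, 0 ≤ t j) ∧ ∑ j, t j ≤ 1},
          ∏ j, maynardWeight (k * A) (T / k) (t j) ^ 2 := by
  set w := maynardWeight (k * A) (T / k)
  set μ := maynardMean A
  set δ := k * (1 - μ) / (2 * T)
  set c₀ := (1 - exp (-A)) / (k * A)
  set n := Fintype.card ι
  have hA0 : 0 < A := by linarith
  have hk0 : 0 < k := by
    have : 0 < L := hL.trans_lt' (by linarith [log_nonneg (by linarith : 1 ≤ A)])
    rw [hk]; positivity
  have hT0 : 0 < T := by rw [hT]; exact div_pos (by linarith [one_lt_exp_iff.mpr hA0]) hA0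
  have hδ : 0 ≤ δ :=
    div_nonneg (mul_nonneg hk0.le (sub_nonneg.mpr (maynardMean_le_one hA0))) (by positivity)
  have haM : 1 + k * A * (T / k) = exp A := by rw [hT]; field_simp; ring
  have hc₀ : ∫ x, w x ^ 2 = c₀ := by
    rw [integral_maynardWeight_sq (by positivity) (by positivity), haM, ← exp_neg]
  have hmgf : ∫ x, exp (δ * x) * w x ^ 2 ≤ c₀ * (1 + δ * exp ((1 - μ) / 2) * μ / k) := by
    refine (integral_exp_mul_maynardWeight_sq_le (by positivity) (by positivity) hδ).trans_eq ?_
    have hδM : δ * (T / k) = (1 - μ) / 2 := by simp only [δ]; field_simp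
    have : 1 - exp (-A) ≠ 0 := by linarith [exp_lt_one_iff.mpr (by linarith : -A < 0)]
    rw [haM, log_exp, ← exp_neg, hδM]
    simp only [c₀, μ, maynardMean]
    field_simp
    ring
  have htail : exp (-δ) * (∫ x, exp (δ * x) * w x ^ 2) ^ n
      ≤ c₀ ^ n * (1 - (A - 2) * ((1 - exp (-A)) / A)) := by
    have hc₀0 : 0 ≤ c₀ := div_nonneg (by linarith [exp_le_one_iff.mpr (by linarith : -A ≤ 0)])
      (by positivity)
    calc exp (-δ) * (∫ x, exp (δ * x) * w x ^ 2) ^ n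
        ≤ exp (-δ) * (c₀ * (1 + δ * exp ((1 - μ) / 2) * μ / k)) ^ n := by
          gcongr
      _ = c₀ ^ n * (exp (-δ) * (1 + δ * exp ((1 - μ) / 2) * μ / k) ^ n) := by
          rw [mul_pow]; ring
      _ ≤ c₀ ^ n * exp (-(k * (1 - μ) ^ 2 / (4 * T))) := by
          have hexponent : δ * ((1 - μ) / 2) = k * (1 - μ) ^ 2 / (4 * T) := by
            simp only [δ]; ring
          rw [← hexponent]
          gcongr
          exact exp_neg_mul_one_add_pow_le hδ (maynardMean_nonneg hA0) hk0 hn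
      _ ≤ c₀ ^ n * (1 - (A - 2) * ((1 - exp (-A)) / A)) := by
          gcongr
          exact exp_neg_mul_one_sub_maynardMean_sq_div_le hA hL hk hT
  have hchernoff := pow_sub_le_setIntegral_simplex_prod (ι := ι) hδ (fun x => sq_nonneg (w x))
    (fun x hx => maynardWeight_sq_eq_zero fun h => (not_le.mpr hx) h.1)
    (integrable_maynardWeight_sq (by positivity))
    (integrable_mul_maynardWeight_sq (by positivity) (by fun_prop))
  rw [hc₀] at hchernoff
  linarith

section LogLog

variable {k A : ℝ}

lemma eq_exp_mul_log_sq_of_eq_log_sub (hk : 1 < k) (hA : A = log k - 2 * log (log k)) :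
    k = exp A * log k ^ 2 := by
  have hlog : 2 * log (log k) = log (log k ^ 2) := by rw [log_pow]; norm_num
  have hL0 : 0 < log k := log_pos hk
  rw [hA, hlog, exp_sub, exp_log (by linarith), exp_log (by positivity)]
  field_simp

lemma add_two_mul_log_le_log_of_eq_log_sub (hk : exp 1 ≤ k) (hA0 : 0 < A)
    (hA : A = log k - 2 * log (log k)) : A + 2 * log A ≤ log k := by
  have hL1 : 1 ≤ log k := (le_log_iff_exp_le (by linarith [exp_pos 1])).mpr hk
  have : log A ≤ log (log k) := log_le_log hA0 (by rw [hA]; linarith [log_nonneg hL1])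
  linarith

end LogLog

theorem maynard_Fcirc_key_lower_general (k₀ : ℕ) (hk : 2 ≤ k₀)
    (A T γ : ℝ)
    (hA : A = Real.log (2 * k₀) - 2 * Real.log (Real.log (2 * k₀)))
    (hA2 : 2 < A)
    (hT : T = (Real.exp A - 1) / A)
    (hγ : γ = 1 / A * (1 - 1 / (1 + A * T))) :
    ((Real.log (2 * k₀) - 2 * Real.log (Real.log (2 * k₀)) - 2) / (2 * k₀)) *
        (γ ^ (2 * k₀) / (2 * k₀ : ℝ) ^ (2 * k₀))
      ≤ ∫ t in {t : Fin (2 * k₀ - 1) → ℝ | (∀ j, 0 ≤ t j) ∧ ∑ j, t j ≤ 1},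
          (∫ x in Set.Ioi (0 : ℝ),
            (∏ j, (Set.indicator (Set.Icc (0 : ℝ) T) (fun _ => (1 : ℝ))
              (2 * k₀ * t j)) / (1 + 2 * k₀ * A * t j)) *
            ((Set.indicator (Set.Icc (0 : ℝ) T) (fun _ => (1 : ℝ))
              (2 * k₀ * x)) / (1 + 2 * k₀ * A * x))) ^ 2 := by
  set k : ℝ := 2 * k₀
  have hk4 : 4 ≤ k := by simp only [k]; norm_cast; omega
  have hek := eq_exp_mul_log_sq_of_eq_log_sub (by linarith) hA
  have hL := add_two_mul_log_le_log_of_eq_log_sub (by linarith [exp_one_lt_d9]) (by linarith) hA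
  have hATexp : 1 + A * T = exp A := by rw [hT]; field_simp; ring
  have hT0 : 0 ≤ T := by rw [hT]; exact div_nonneg (by linarith [add_one_le_exp A]) (by linarith)
  simp_rw [indicator_Icc_mul_div_eq_maynardWeight (show 0 < k by linarith)]
  set w := maynardWeight (k * A) (T / k)
  have hinner : ∀ t : Fin (2 * k₀ - 1) → ℝ,
      (∫ x in Ioi 0, (∏ j, w (t j)) * w x) ^ 2 = (∏ j, w (t j) ^ 2) / k ^ 2 := by
    intro t
    rw [integral_const_mul, integral_Ioi_maynardWeight (by positivity) (by positivity),
      show 1 + k * A * (T / k) = exp A by rw [← hATexp]; field_simp, log_exp, mul_pow,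
      Finset.prod_pow]
    field_simp
  simp_rw [hinner, integral_div]
  have hsimplex := pow_mul_le_setIntegral_simplex_prod_maynardWeight_sq (ι := Fin (2 * k₀ - 1))
    hA2 hL hek hT (by simp only [Fintype.card_fin, k]; norm_cast; omega)
  rw [Fintype.card_fin] at hsimplex
  have hpow : ∀ x : ℝ, x ^ (2 * k₀) = x ^ (2 * k₀ - 1) * x := fun x => by
    rw [← pow_succ, Nat.sub_add_cancel (by omega)]
  rw [← hA, show γ = (1 - exp (-A)) / A by rw [hγ, hATexp, exp_neg]; ring, hpow, hpow]
  calc _ = ((1 - exp (-A)) / (k * A)) ^ (2 * k₀ - 1) * ((A - 2) * ((1 - exp (-A)) / A))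
        / k ^ 2 := by simp only [div_pow, mul_pow]; field_simp
    _ ≤ _ := by gcongr

theorem maynard_Fcirc_key_lower (k₀ : ℕ) (hk : 2 ≤ k₀)
    (A T γ : ℝ)
    (hA : A = Real.log (2 * k₀) - 2 * Real.log (Real.log (2 * k₀)))
    (hA2 : 2 < A)
    (hT : T = (Real.exp A - 1) / A)
    (hγ : γ = 1 / A * (1 - 1 / (1 + A * T)))
    (hpos : 0 < 1 - A / (Real.exp A - 1) - Real.exp A / (2 * k₀)) :
    ((Real.log (2 * k₀) - 2 * Real.log (Real.log (2 * k₀)) - 2) / (2 * k₀)) *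
        (γ ^ (2 * k₀) / (2 * k₀ : ℝ) ^ (2 * k₀))
      ≤ ∫ t in {t : Fin (2 * k₀ - 1) → ℝ | (∀ j, 0 ≤ t j) ∧ ∑ j, t j ≤ 1},
          (∫ x in Set.Ioi (0 : ℝ),
            (∏ j, (Set.indicator (Set.Icc (0 : ℝ) T) (fun _ => (1 : ℝ))
              (2 * k₀ * t j)) / (1 + 2 * k₀ * A * t j)) *
            ((Set.indicator (Set.Icc (0 : ℝ) T) (fun _ => (1 : ℝ))
              (2 * k₀ * x)) / (1 + 2 * k₀ * A * x))) ^ 2 :=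
  maynard_Fcirc_key_lower_general k₀ hk A T γ hA hA2 hT hγ
end
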